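/- Let β be a real number with 0 < β < β_h − d_f/2, and assume that ∑_{n≥0} α^{−2nβ} ∑_{k=1}^{N^{n+1}} (ξ^{(n+1)}_k)² < ∞. Then for every z ∈ Z and every n ≥ 0, |S^{(n)}(z)| ≤ |h(z, y^{(0)}_1)| · |ξ^{(0)}_1| + K_h · (∑_{m≥0} N^{m+1} α^{2m(β−β_h)})^{1/2} · (∑_{m≥0} α^{−2mβ} ∑_{k=1}^{N^{m+1}} (ξ^{(m+1)}_k)²)^{1/2}, where the first series on the right converges because 2(β_h − β) > d_f = log N / log α. -/

import Mathlib

/-!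
By additivity of the weights, `S⁽ᵐ⁾(z) = ∑ₖ h(z, y⁽ᵐ⁾_{c(k)}) ξ⁽ᵐ⁺¹⁾ₖ`, so the increment
`S⁽ᵐ⁺¹⁾ - S⁽ᵐ⁾` pairs each weight `ξ⁽ᵐ⁺¹⁾ₖ` with a difference of `h(z, ·)` at two points of the
level-`m` set `E⁽ᵐ⁾_{c(k)}`. The Hölder bound makes that difference at most `K_h α^{-m β_h}`, and
Cauchy–Schwarz over the `N^{m+1}` indices gives `|S⁽ᵐ⁺¹⁾ - S⁽ᵐ⁾| ≤ K_h √Aₘ √Bₘ` with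
`Aₘ = N^{m+1} α^{2m(β-β_h)}` and `Bₘ = α^{-2mβ} ∑ₖ (ξ⁽ᵐ⁺¹⁾ₖ)²`, the factor `α^{-m β_h}` being split
as `√(α^{2m(β-β_h)}) √(α^{-2mβ})`. Telescoping from `S⁽⁰⁾` and Cauchy–Schwarz over `m` conclude;
`∑ Aₘ` is geometric with ratio `N α^{-2(β_h-β)} < 1` precisely because `d_f < 2(β_h - β)`.
-/

open Finset in
theorem sum_mul_eq_sum_comp_mul_of_eq_sum_fiber {ι κ : Type*} [Fintype ι] [Fintype κ]
    [DecidableEq κ] (c : ι → κ) {w : ι → ℝ} {w' : κ → ℝ}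
    (hw : ∀ j, w' j = ∑ i ∈ univ.filter (fun i => c i = j), w i) (f : κ → ℝ) :
    ∑ j, f j * w' j = ∑ i, f (c i) * w i := by
  rw [← sum_fiberwise univ c (fun i => f (c i) * w i)]
  refine sum_congr rfl fun j _ => ?_
  rw [hw, mul_sum]
  exact sum_congr rfl fun i hi => by rw [(mem_filter.mp hi).2]

theorem abs_sum_mul_le_mul_sqrt_card_mul_sqrt_sum_sq {ι : Type*} [Fintype ι] {a w : ι → ℝ}
    {C : ℝ} (hC : 0 ≤ C) (ha : ∀ i, |a i| ≤ C) :
    |∑ i, a i * w i| ≤ C * (√(Fintype.card ι) * √(∑ i, w i ^ 2)) := by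
  have hCS : ∑ i, |w i| ≤ √(Fintype.card ι) * √(∑ i, w i ^ 2) := by
    simpa [sq_abs] using
      Real.sum_mul_le_sqrt_mul_sqrt Finset.univ (fun _ => (1 : ℝ)) (fun i => |w i|)
  calc |∑ i, a i * w i| ≤ ∑ i, |a i| * |w i| := by
        simpa only [abs_mul] using Finset.abs_sum_le_sum_abs (fun i => a i * w i) Finset.univ
    _ ≤ ∑ i, C * |w i| := by gcongr with i; exact ha i
    _ ≤ C * (√(Fintype.card ι) * √(∑ i, w i ^ 2)) := by rw [← Finset.mul_sum]; gcongr

theorem abs_sub_le_of_holder_of_mem {X : Type*} [PseudoMetricSpace X] {f : X → ℝ}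
    {K r δ : ℝ} (hK : 0 ≤ K) (hr : 0 ≤ r) (hf : ∀ x₁ x₂, |f x₁ - f x₂| ≤ K * dist x₁ x₂ ^ r)
    {s : Set X} (hδ : 0 ≤ δ) (hs : Metric.ediam s ≤ ENNReal.ofReal δ) {x₁ x₂ : X}
    (h₁ : x₁ ∈ s) (h₂ : x₂ ∈ s) : |f x₁ - f x₂| ≤ K * δ ^ r := by
  have hdist : dist x₁ x₂ ≤ δ :=
    (edist_le_ofReal hδ).mp ((Metric.edist_le_ediam_of_mem h₁ h₂).trans hs)
  exact (hf x₁ x₂).trans (by gcongr)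

open Finset in
theorem abs_sum_sub_sum_le_of_refinement {X ι κ : Type*} [PseudoMetricSpace X] [Fintype ι]
    [Fintype κ] [DecidableEq κ] {f : X → ℝ} {K r δ : ℝ} (hK : 0 ≤ K) (hr : 0 ≤ r)
    (hf : ∀ x₁ x₂, |f x₁ - f x₂| ≤ K * dist x₁ x₂ ^ r) {E : κ → Set X} (hδ : 0 ≤ δ)
    (hE : ∀ j, Metric.ediam (E j) ≤ ENNReal.ofReal δ) (c : ι → κ) {x : ι → X} {x' : κ → X}
    (hx : ∀ i, x i ∈ E (c i)) (hx' : ∀ j, x' j ∈ E j) {w : ι → ℝ} {w' : κ → ℝ}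
    (hw : ∀ j, w' j = ∑ i ∈ univ.filter (fun i => c i = j), w i) :
    |∑ i, f (x i) * w i - ∑ j, f (x' j) * w' j|
      ≤ K * δ ^ r * (√(Fintype.card ι) * √(∑ i, w i ^ 2)) := by
  rw [sum_mul_eq_sum_comp_mul_of_eq_sum_fiber c hw, ← sum_sub_distrib]
  simp_rw [← sub_mul]
  exact abs_sum_mul_le_mul_sqrt_card_mul_sqrt_sum_sq (by positivity) fun i =>
    abs_sub_le_of_holder_of_mem hK hr hf hδ (hE (c i)) (hx i) (hx' (c i))

theorem natCast_mul_rpow_neg_lt_one {α t : ℝ} (hα : 1 < α) (N : ℕ)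
    (ht : Real.log N / Real.log α < t) : (N : ℝ) * α ^ (-t) < 1 := by
  rcases N.eq_zero_or_pos with rfl | hN
  · simp
  have hα0 : 0 < α := by linarith
  have hNt : (N : ℝ) < α ^ t :=
    (Real.lt_rpow_iff_log_lt (by exact_mod_cast hN) hα0).mpr
      ((div_lt_iff₀ (Real.log_pos hα)).mp ht)
  rwa [Real.rpow_neg hα0.le, ← div_eq_mul_inv, div_lt_one (by positivity)]

theorem summable_natCast_pow_succ_mul_rpow {α β γ : ℝ} (hα : 1 < α) (N : ℕ)
    (h : β < γ - Real.log N / Real.log α / 2) :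
    Summable fun m : ℕ => (N : ℝ) ^ (m + 1) * α ^ (2 * (m : ℝ) * (β - γ)) := by
  have hα0 : 0 < α := by linarith
  have hq := natCast_mul_rpow_neg_lt_one hα N (t := 2 * (γ - β)) (by linarith)
  refine ((summable_geometric_of_lt_one (by positivity) hq).mul_left (N : ℝ)).congr fun m => ?_
  rw [mul_pow, ← Real.rpow_natCast (α ^ _), ← Real.rpow_mul hα0.le, pow_succ',
    show -(2 * (γ - β)) * (m : ℝ) = 2 * m * (β - γ) by ring]
  ring

theorem Real.sqrt_rpow_mul_sqrt_rpow {α : ℝ} (hα : 0 < α) (s t : ℝ) :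
    √(α ^ s) * √(α ^ t) = α ^ ((s + t) / 2) := by
  rw [← Real.sqrt_mul (by positivity), ← Real.rpow_add hα, Real.sqrt_eq_rpow,
    ← Real.rpow_mul hα.le]
  ring_nf

theorem abs_le_abs_zero_add_mul_sqrt_tsum_mul_sqrt_tsum {s a b : ℕ → ℝ} {K : ℝ} (hK : 0 ≤ K)
    (ha₀ : ∀ m, 0 ≤ a m) (hb₀ : ∀ m, 0 ≤ b m) (ha : Summable a) (hb : Summable b)
    (hs : ∀ m, |s (m + 1) - s m| ≤ K * (√(a m) * √(b m))) (n : ℕ) :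
    |s n| ≤ |s 0| + K * √(∑' m, a m) * √(∑' m, b m) := by
  have htel : |s n - s 0| ≤ ∑ m ∈ Finset.range n, |s (m + 1) - s m| := by
    simpa only [Real.dist_eq, abs_sub_comm] using dist_le_range_sum_dist s n
  have hCS : ∑ m ∈ Finset.range n, √(a m) * √(b m) ≤ √(∑' m, a m) * √(∑' m, b m) :=
    (Real.sum_sqrt_mul_sqrt_le _ ha₀ hb₀).trans <| by
      gcongr
      exacts [ha.sum_le_tsum _ fun m _ => ha₀ m, hb.sum_le_tsum _ fun m _ => hb₀ m]
  calc |s n| ≤ |s 0| + |s n - s 0| := by simpa using abs_add_le (s 0) (s n - s 0)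
    _ ≤ |s 0| + ∑ m ∈ Finset.range n, K * (√(a m) * √(b m)) := by
        gcongr; exact htel.trans (Finset.sum_le_sum fun m _ => hs m)
    _ ≤ |s 0| + K * √(∑' m, a m) * √(∑' m, b m) := by
        rw [← Finset.mul_sum, mul_assoc]; gcongr

/-- Context as in Statement 0: `(X,d)` a metric space, `α > 1`, `N ≥ 2`,
`d_f = log N / log α`, nested nonempty sets `E n k` with diameter at most `α^{-n}`,
parent map `c`, refinement-additive weights `ξ n k`, points `y n k ∈ E n k`, `Z` a
topological space, `h : Z × X → ℝ` bounded, continuous in `z`, Hölder in `y` with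
exponent `β_h > d_f/2`, and `S n z = ∑_k h(z, y n k) ξ n k`.

Claim: if `0 < β < β_h − d_f/2` and `∑_{n≥0} α^{−2nβ} ∑_k (ξ^{(n+1)}_k)² < ∞`, then for
every `z` and `n`,
`|S^{(n)}(z)| ≤ |h(z, y^{(0)}_1)|·|ξ^{(0)}_1|
  + K_h (∑_{m≥0} N^{m+1} α^{2m(β−β_h)})^{1/2} (∑_{m≥0} α^{−2mβ} ∑_k (ξ^{(m+1)}_k)²)^{1/2}`,
where the first series on the right converges (since `2(β_h − β) > d_f`). -/
theorem statement1
    {X : Type*} [MetricSpace X] {Z : Type*}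
    (α : ℝ) (hα : 1 < α) (N : ℕ)
    (E : ∀ n : ℕ, Fin (N ^ n) → Set X)
    (hE_diam : ∀ n k, EMetric.diam (E n k) ≤ ENNReal.ofReal ((α ^ n)⁻¹))
    (c : ∀ n : ℕ, Fin (N ^ (n + 1)) → Fin (N ^ n))
    (hc : ∀ n k, E (n + 1) k ⊆ E n (c n k))
    (ξ : ∀ n : ℕ, Fin (N ^ n) → ℝ)
    (hξ : ∀ n k', ξ n k' = ∑ k ∈ Finset.univ.filter (fun k => c n k = k'), ξ (n + 1) k)
    (y : ∀ n : ℕ, Fin (N ^ n) → X)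
    (hy : ∀ n k, y n k ∈ E n k)
    (h : Z → X → ℝ)
    (Kh βh : ℝ) (hKh : 0 < Kh)
    (hβh : Real.log N / Real.log α / 2 < βh)
    (h_hold : ∀ z (y₁ y₂ : X), |h z y₁ - h z y₂| ≤ Kh * dist y₁ y₂ ^ βh)
    (S : ℕ → Z → ℝ)
    (hS : ∀ n z, S n z = ∑ k, h z (y n k) * ξ n k)
    (β : ℝ) (hβ : β < βh - Real.log N / Real.log α / 2)
    (hsum : Summable fun n : ℕ =>
      α ^ (-(2 * (n : ℝ) * β)) * ∑ k, (ξ (n + 1) k) ^ 2) :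
    (Summable fun m : ℕ =>
      (N : ℝ) ^ (m + 1) * α ^ (2 * (m : ℝ) * (β - βh))) ∧
    ∀ (z : Z) (n : ℕ),
      |S n z| ≤ |h z (y 0 ⟨0, by simp⟩)| * |ξ 0 ⟨0, by simp⟩|
        + Kh * Real.sqrt (∑' m : ℕ, (N : ℝ) ^ (m + 1) * α ^ (2 * (m : ℝ) * (β - βh)))
            * Real.sqrt (∑' m : ℕ,
                α ^ (-(2 * (m : ℝ) * β)) * ∑ k, (ξ (m + 1) k) ^ 2) := by
  have hα0 : 0 < α := by linarith
  have hβh0 : 0 ≤ βh := hβh.le.trans' <| by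
    have := Real.log_natCast_nonneg N; have := Real.log_pos hα; positivity
  set A : ℕ → ℝ := fun m => (N : ℝ) ^ (m + 1) * α ^ (2 * (m : ℝ) * (β - βh)) with hA
  set B : ℕ → ℝ := fun m => α ^ (-(2 * (m : ℝ) * β)) * ∑ k, (ξ (m + 1) k) ^ 2 with hB
  have hA_sum : Summable A := summable_natCast_pow_succ_mul_rpow hα N hβ
  refine ⟨hA_sum, fun z n => ?_⟩
  have hinc : ∀ m, |S (m + 1) z - S m z| ≤ Kh * (√(A m) * √(B m)) := fun m => by
    have hscale : √(α ^ (2 * (m : ℝ) * (β - βh))) * √(α ^ (-(2 * (m : ℝ) * β)))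
        = ((α ^ m)⁻¹) ^ βh := by
      rw [Real.sqrt_rpow_mul_sqrt_rpow hα0, ← Real.rpow_natCast, ← Real.rpow_neg hα0.le,
        ← Real.rpow_mul hα0.le]
      ring_nf
    rw [hS, hS]
    refine (abs_sum_sub_sum_le_of_refinement hKh.le hβh0 (h_hold z) (by positivity)
      (hE_diam m) (c m) (fun k => hc m k (hy (m + 1) k)) (hy m) (hξ m)).trans_eq ?_
    rw [hA, hB, Real.sqrt_mul (by positivity), Real.sqrt_mul (by positivity), ← hscale,
      Fintype.card_fin]
    push_cast
    ring
  have hbound := abs_le_abs_zero_add_mul_sqrt_tsum_mul_sqrt_tsum (s := (S · z)) hKh.le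
    (fun m => by positivity) (fun m => by positivity) hA_sum hsum hinc n
  have : Subsingleton (Fin (N ^ 0)) := Fin.subsingleton_iff_le_one.mpr (by simp)
  rwa [hS 0 z, Fintype.sum_subsingleton _ ⟨0, by simp⟩, abs_mul] at hbound
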